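/- Let G be a tensor with ||G||_max ≤ B (maximum absolute entry at most B), and suppose D = G ⊙ E where E is any tensor of the same shape as G, rank(G) ≤ R_G exactly, and there exists a CP tensor Ē of rank R_E with ||E − Ē|| ≤ ε. Then there exists a CP tensor of rank at most R_G · R_E approximating D within B·ε in Frobenius norm; i.e. rank_{Bε}(D) ≤ R_G · R_E. -/

import Mathlib

/-- A CP (canonical polyadic) tensor of rank `R` built from factor matrices. -/
def cpTensor {ι₁ ι₂ ι₃ ι₄ : Type*} (R : ℕ)
    (A : ι₁ → Fin R → ℝ) (B : ι₂ → Fin R → ℝ) (C : ι₃ → Fin R → ℝ) (D : ι₄ → Fin R → ℝ) :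
    ι₁ → ι₂ → ι₃ → ι₄ → ℝ :=
  fun μ ν σ lam => ∑ r, A μ r * B ν r * C σ r * D lam r

/-- The Frobenius norm of a four-index tensor. -/
noncomputable def frob {ι₁ ι₂ ι₃ ι₄ : Type*} [Fintype ι₁] [Fintype ι₂] [Fintype ι₃] [Fintype ι₄]
    (T : ι₁ → ι₂ → ι₃ → ι₄ → ℝ) : ℝ :=
  Real.sqrt (∑ μ, ∑ ν, ∑ σ, ∑ lam, (T μ ν σ lam) ^ 2)

/-- The ε-effective CP rank of a four-index tensor: the minimal `R` such that some tensor
of CP rank `R` approximates `T` within `ε` in the Frobenius norm. -/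
noncomputable def erank {ι₁ ι₂ ι₃ ι₄ : Type*} [Fintype ι₁] [Fintype ι₂] [Fintype ι₃] [Fintype ι₄]
    (ε : ℝ) (T : ι₁ → ι₂ → ι₃ → ι₄ → ℝ) : ℕ :=
  sInf {R : ℕ | ∃ A B C D, frob (T - cpTensor R A B C D) ≤ ε}

/-- The maximum absolute entry of a four-index tensor. -/
noncomputable def maxAbs {ι₁ ι₂ ι₃ ι₄ : Type*} [Fintype ι₁] [Fintype ι₂] [Fintype ι₃] [Fintype ι₄]
    [Nonempty ι₁] [Nonempty ι₂] [Nonempty ι₃] [Nonempty ι₄]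
    (T : ι₁ → ι₂ → ι₃ → ι₄ → ℝ) : ℝ :=
  Finset.univ.sup' Finset.univ_nonempty
    (fun i : ι₁ × ι₂ × ι₃ × ι₄ => |T i.1 i.2.1 i.2.2.1 i.2.2.2|)


private lemma cpTensor_mul {ι₁ ι₂ ι₃ ι₄ : Type*} (RG RE : ℕ)
    (A₁ : ι₁ → Fin RG → ℝ) (A₂ : ι₂ → Fin RG → ℝ) (A₃ : ι₃ → Fin RG → ℝ) (A₄ : ι₄ → Fin RG → ℝ)
    (B₁ : ι₁ → Fin RE → ℝ) (B₂ : ι₂ → Fin RE → ℝ) (B₃ : ι₃ → Fin RE → ℝ) (B₄ : ι₄ → Fin RE → ℝ)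
    (μ : ι₁) (ν : ι₂) (σ : ι₃) (lam : ι₄) :
    cpTensor RG A₁ A₂ A₃ A₄ μ ν σ lam * cpTensor RE B₁ B₂ B₃ B₄ μ ν σ lam =
    cpTensor (RG * RE)
      (fun i r => A₁ i (finProdFinEquiv.symm r).1 * B₁ i (finProdFinEquiv.symm r).2)
      (fun i r => A₂ i (finProdFinEquiv.symm r).1 * B₂ i (finProdFinEquiv.symm r).2)
      (fun i r => A₃ i (finProdFinEquiv.symm r).1 * B₃ i (finProdFinEquiv.symm r).2)
      (fun i r => A₄ i (finProdFinEquiv.symm r).1 * B₄ i (finProdFinEquiv.symm r).2)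
      μ ν σ lam := by
  simp only [cpTensor]
  rw [Finset.sum_mul_sum, ← Equiv.sum_comp (finProdFinEquiv : Fin RG × Fin RE ≃ Fin (RG*RE)),
    Fintype.sum_prod_type]
  refine Finset.sum_congr rfl fun p _ => Finset.sum_congr rfl fun q _ => ?_
  simp only [Equiv.symm_apply_apply]
  ring

private lemma frob_nonneg {ι₁ ι₂ ι₃ ι₄ : Type*} [Fintype ι₁] [Fintype ι₂] [Fintype ι₃] [Fintype ι₄]
    (T : ι₁ → ι₂ → ι₃ → ι₄ → ℝ) : 0 ≤ frob T := Real.sqrt_nonneg _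

private lemma frob_smul_le {ι₁ ι₂ ι₃ ι₄ : Type*} [Fintype ι₁] [Fintype ι₂] [Fintype ι₃] [Fintype ι₄]
    (G T : ι₁ → ι₂ → ι₃ → ι₄ → ℝ) (B : ℝ) (hB0 : 0 ≤ B)
    (hB : ∀ μ ν σ lam, |G μ ν σ lam| ≤ B) :
    frob (fun μ ν σ lam => G μ ν σ lam * T μ ν σ lam) ≤ B * frob T := by
  have key : (∑ μ, ∑ ν, ∑ σ, ∑ lam, (G μ ν σ lam * T μ ν σ lam) ^ 2)
      ≤ B ^ 2 * ∑ μ, ∑ ν, ∑ σ, ∑ lam, (T μ ν σ lam) ^ 2 := by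
    rw [Finset.mul_sum]
    refine Finset.sum_le_sum fun μ _ => ?_
    rw [Finset.mul_sum]
    refine Finset.sum_le_sum fun ν _ => ?_
    rw [Finset.mul_sum]
    refine Finset.sum_le_sum fun σ _ => ?_
    rw [Finset.mul_sum]
    refine Finset.sum_le_sum fun lam _ => ?_
    rw [mul_pow]
    have h1 : (G μ ν σ lam) ^ 2 ≤ B ^ 2 := by
      have := hB μ ν σ lam
      nlinarith [abs_nonneg (G μ ν σ lam), sq_abs (G μ ν σ lam)]
    nlinarith [sq_nonneg (T μ ν σ lam), sq_nonneg (G μ ν σ lam)]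
  calc frob (fun μ ν σ lam => G μ ν σ lam * T μ ν σ lam)
      ≤ Real.sqrt (B ^ 2 * ∑ μ, ∑ ν, ∑ σ, ∑ lam, (T μ ν σ lam) ^ 2) :=
        Real.sqrt_le_sqrt key
    _ = B * frob T := by
        rw [Real.sqrt_mul (sq_nonneg B), Real.sqrt_sq hB0]; rfl


/-- Suppose `D = G ⊙ E` (Hadamard product) where `G` has all entries of
absolute value at most `B` and exact CP rank at most `R_G`, and `E` admits a CP approximation
of rank `R_E` within `ε` in Frobenius norm. Then `rank_{Bε}(D) ≤ R_G · R_E`. -/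
theorem erank_hadamard_factorization {ι₁ ι₂ ι₃ ι₄ : Type*}
    [Fintype ι₁] [Fintype ι₂] [Fintype ι₃] [Fintype ι₄]
    (D G E : ι₁ → ι₂ → ι₃ → ι₄ → ℝ) (B ε : ℝ) (RG RE : ℕ)
    (hD : ∀ μ ν σ lam, D μ ν σ lam = G μ ν σ lam * E μ ν σ lam)
    (hB : ∀ μ ν σ lam, |G μ ν σ lam| ≤ B)
    (hG : ∃ A₁ A₂ A₃ A₄, G = cpTensor RG A₁ A₂ A₃ A₄)
    (hE : ∃ A₁ A₂ A₃ A₄, frob (E - cpTensor RE A₁ A₂ A₃ A₄) ≤ ε) :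
    erank (B * ε) D ≤ RG * RE := by
  obtain ⟨A₁, A₂, A₃, A₄, hGeq⟩ := hG
  obtain ⟨B₁, B₂, B₃, B₄, hEle⟩ := hE
  have hε0 : 0 ≤ ε := le_trans (frob_nonneg _) hEle
  by_cases hB0 : 0 ≤ B
  · -- membership case
    refine Nat.sInf_le ?_
    refine ⟨(fun i r => A₁ i (finProdFinEquiv.symm r).1 * B₁ i (finProdFinEquiv.symm r).2),
      (fun i r => A₂ i (finProdFinEquiv.symm r).1 * B₂ i (finProdFinEquiv.symm r).2),
      (fun i r => A₃ i (finProdFinEquiv.symm r).1 * B₃ i (finProdFinEquiv.symm r).2),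
      (fun i r => A₄ i (finProdFinEquiv.symm r).1 * B₄ i (finProdFinEquiv.symm r).2), ?_⟩
    have heq : (D - cpTensor (RG * RE)
        (fun i r => A₁ i (finProdFinEquiv.symm r).1 * B₁ i (finProdFinEquiv.symm r).2)
        (fun i r => A₂ i (finProdFinEquiv.symm r).1 * B₂ i (finProdFinEquiv.symm r).2)
        (fun i r => A₃ i (finProdFinEquiv.symm r).1 * B₃ i (finProdFinEquiv.symm r).2)
        (fun i r => A₄ i (finProdFinEquiv.symm r).1 * B₄ i (finProdFinEquiv.symm r).2))
        = fun μ ν σ lam => G μ ν σ lam *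
            (E - cpTensor RE B₁ B₂ B₃ B₄) μ ν σ lam := by
      funext μ ν σ lam
      have hprod := cpTensor_mul RG RE A₁ A₂ A₃ A₄ B₁ B₂ B₃ B₄ μ ν σ lam
      simp only [Pi.sub_apply]
      rw [← hprod, hD μ ν σ lam, ← congrFun (congrFun (congrFun (congrFun hGeq μ) ν) σ) lam]
      ring
    rw [heq]
    calc frob (fun μ ν σ lam => G μ ν σ lam * (E - cpTensor RE B₁ B₂ B₃ B₄) μ ν σ lam)
        ≤ B * frob (E - cpTensor RE B₁ B₂ B₃ B₄) := frob_smul_le _ _ B hB0 hB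
      _ ≤ B * ε := by nlinarith [frob_nonneg (E - cpTensor RE B₁ B₂ B₃ B₄)]
  · -- B < 0 : some index type is empty
    push_neg at hB0
    have hempty : IsEmpty ι₁ ∨ IsEmpty ι₂ ∨ IsEmpty ι₃ ∨ IsEmpty ι₄ := by
      by_contra h
      push_neg at h
      obtain ⟨⟨μ⟩, ⟨ν⟩, ⟨σ⟩, ⟨lam⟩⟩ := h
      exact absurd (le_trans (abs_nonneg _) (hB μ ν σ lam)) (not_le.mpr hB0)
    have hfzero : ∀ (T : ι₁ → ι₂ → ι₃ → ι₄ → ℝ), frob T = 0 := by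
      intro T
      rcases hempty with h | h | h | h <;>
        · rw [frob]
          rw [show (∑ μ, ∑ ν, ∑ σ, ∑ lam, (T μ ν σ lam) ^ 2) = 0 by simp]
          exact Real.sqrt_zero
    rcases eq_or_lt_of_le hε0 with hε | hε
    · refine Nat.sInf_le ⟨fun _ _ => 0, fun _ _ => 0, fun _ _ => 0, fun _ _ => 0, ?_⟩
      rw [hfzero, ← hε, mul_zero]
    · have hset : {R : ℕ | ∃ A B' C D', frob (D - cpTensor R A B' C D') ≤ B * ε} = ∅ := by
        refine Set.eq_empty_of_forall_notMem fun R ⟨A, B', C, D', hle⟩ => ?_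
        rw [hfzero] at hle
        nlinarith
      rw [erank, hset, Nat.sInf_empty]
      exact Nat.zero_le _
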